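/- Let r : ℝ → ℝ be bounded, continuously differentiable, strictly increasing, with s·r(s) ≥ 0 for all s, let κ > 0, let c₀ ≥ 0, and let c : [0,∞) → ℝ be the solution of κ·c'' = r(c), c(0) = c₀, c'(0) = 0. If w : [0,∞) → ℝ is twice continuously differentiable and satisfies κ·w''(z) = r'(c(z))·w(z) for all z ≥ 0 with w(0) = 1 and w'(0) = 0, then w(z) ≥ 1 and w'(z) ≥ 0 for all z ≥ 0. -/

import Mathlib

/-! Since `r` is monotone, `r' ≥ 0`, so `w'' = r'(c) w / κ` is nonnegative wherever `w` is.
Hence as long as `w` stays nonnegative, `w'` increases from `w'(0) = 0` and `w` increases from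
`w(0) = 1`. At the first point `T` where `w ≤ 0`, this applies on `[0, T]` and gives
`w(T) ≥ 1`, a contradiction. -/

open Set MeasureTheory intervalIntegral Filter

/-- `c` (with derivative `c'` and second derivative `c''`) solves the initial value
problem `κ·c'' = r(c)` on `[0,∞)` with `c(0) = c₀`, `c'(0) = 0`. -/
def SolvesIVP (κ : ℝ) (r : ℝ → ℝ) (c₀ : ℝ) (c c' c'' : ℝ → ℝ) : Prop :=
  (∀ z ∈ Ici (0:ℝ), HasDerivWithinAt c (c' z) (Ici (0:ℝ)) z) ∧
  (∀ z ∈ Ici (0:ℝ), HasDerivWithinAt c' (c'' z) (Ici (0:ℝ)) z) ∧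
  ContinuousOn c'' (Ici (0:ℝ)) ∧
  (∀ z ∈ Ici (0:ℝ), κ * c'' z = r (c z)) ∧
  c 0 = c₀ ∧ c' 0 = 0

section OneSided

variable {f f' f'' : ℝ → ℝ} {a b : ℝ}

theorem monotoneOn_Icc_of_hasDerivWithinAt_Ici
    (hf : ∀ z ∈ Ici a, HasDerivWithinAt f (f' z) (Ici a) z)
    (hf'₀ : ∀ z ∈ Ioo a b, 0 ≤ f' z) : MonotoneOn f (Icc a b) := by
  refine monotoneOn_of_hasDerivWithinAt_nonneg (f' := f') (convex_Icc a b)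
    (fun z hz => (hf z hz.1).continuousWithinAt.mono Icc_subset_Ici_self) ?_ ?_
  · rw [interior_Icc]
    exact fun z hz => (hf z hz.1.le).mono (Ioo_subset_Ioi_self.trans Ioi_subset_Ici_self)
  · rwa [interior_Icc]

/-- Only `f'' ≥ 0` on the open interval is assumed, so that the lemma applies up to and
including a first exit point of `{f ≥ 0}` without a limiting argument. -/
theorem le_and_deriv_le_on_Icc_of_secondDeriv_nonneg
    (hf : ∀ z ∈ Ici a, HasDerivWithinAt f (f' z) (Ici a) z)
    (hf' : ∀ z ∈ Ici a, HasDerivWithinAt f' (f'' z) (Ici a) z)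
    (hf''₀ : ∀ z ∈ Ioo a b, 0 ≤ f'' z) (ha' : 0 ≤ f' a) :
    ∀ t ∈ Icc a b, f a ≤ f t ∧ f' a ≤ f' t := by
  intro t ht
  have hab : a ≤ b := ht.1.trans ht.2
  have hf'_mono := monotoneOn_Icc_of_hasDerivWithinAt_Ici hf' hf''₀
  have hf'_nonneg : ∀ z ∈ Ioo a b, 0 ≤ f' z := fun z hz =>
    ha'.trans (hf'_mono (left_mem_Icc.2 hab) (Ioo_subset_Icc_self hz) hz.1.le)
  exact ⟨monotoneOn_Icc_of_hasDerivWithinAt_Ici hf hf'_nonneg (left_mem_Icc.2 hab) ht ht.1,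
    hf'_mono (left_mem_Icc.2 hab) ht ht.1⟩

end OneSided

theorem ContinuousOn.exists_first_nonpos_Ici {f : ℝ → ℝ} {a z : ℝ}
    (hf : ContinuousOn f (Ici a)) (hz : z ∈ Ici a) (hfz : f z ≤ 0) :
    ∃ T ∈ Ici a, f T ≤ 0 ∧ ∀ t ∈ Ico a T, 0 < f t := by
  set S := Ici a ∩ f ⁻¹' Iic 0
  have hS_closed : IsClosed S := hf.preimage_isClosed_of_isClosed isClosed_Ici isClosed_Iic
  have hS_bdd : BddBelow S := ⟨a, fun _ hx => hx.1⟩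
  obtain ⟨hT, hfT⟩ := hS_closed.csInf_mem ⟨z, hz, hfz⟩ hS_bdd
  refine ⟨sInf S, hT, hfT, fun t ht => ?_⟩
  by_contra hft
  exact notMem_of_lt_csInf ht.2 hS_bdd ⟨ht.1, not_lt.1 hft⟩

theorem le_and_deriv_le_on_Ici_of_secondDeriv_nonneg_where_nonneg {f f' f'' : ℝ → ℝ} {a : ℝ}
    (hf : ∀ z ∈ Ici a, HasDerivWithinAt f (f' z) (Ici a) z)
    (hf' : ∀ z ∈ Ici a, HasDerivWithinAt f' (f'' z) (Ici a) z)
    (hf''₀ : ∀ z ∈ Ici a, 0 ≤ f z → 0 ≤ f'' z) (ha : 0 < f a) (ha' : 0 ≤ f' a) :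
    ∀ z ∈ Ici a, f a ≤ f z ∧ f' a ≤ f' z := by
  have hpos : ∀ z ∈ Ici a, 0 < f z := by
    by_contra! ⟨z, hz, hfz⟩
    obtain ⟨T, hT, hfT, hpos⟩ := ContinuousOn.exists_first_nonpos_Ici
      (fun z hz => (hf z hz).continuousWithinAt) hz hfz
    have hgrow := le_and_deriv_le_on_Icc_of_secondDeriv_nonneg hf hf'
      (fun t ht => hf''₀ t ht.1.le (hpos t (Ioo_subset_Ico_self ht)).le) ha' T ⟨hT, le_rfl⟩
    linarith [hgrow.1]
  intro z hz
  exact le_and_deriv_le_on_Icc_of_secondDeriv_nonneg hf hf'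
    (fun t ht => hf''₀ t ht.1.le (hpos t ht.1.le).le) ha' z ⟨hz, le_rfl⟩

theorem linearized_IVP_lower_bounds_general
    (κ : ℝ) (hκ : 0 < κ)
    (r : ℝ → ℝ) (hrmono : StrictMono r)
    (c : ℝ → ℝ)
    (w w' w'' : ℝ → ℝ)
    (hw1 : ∀ z ∈ Ici (0:ℝ), HasDerivWithinAt w (w' z) (Ici (0:ℝ)) z)
    (hw2 : ∀ z ∈ Ici (0:ℝ), HasDerivWithinAt w' (w'' z) (Ici (0:ℝ)) z)
    (hwode : ∀ z ∈ Ici (0:ℝ), κ * w'' z = deriv r (c z) * w z)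
    (hw0 : w 0 = 1) (hw0' : w' 0 = 0) :
    ∀ z ∈ Ici (0:ℝ), 1 ≤ w z ∧ 0 ≤ w' z := by
  have hw''_nonneg : ∀ z ∈ Ici (0:ℝ), 0 ≤ w z → 0 ≤ w'' z := fun z hz hwz => by
    have : 0 ≤ κ * w'' z := hwode z hz ▸ mul_nonneg hrmono.monotone.deriv_nonneg hwz
    exact nonneg_of_mul_nonneg_right (by linarith) hκ
  simpa only [hw0, hw0'] using le_and_deriv_le_on_Ici_of_secondDeriv_nonneg_where_nonneg hw1 hw2
    hw''_nonneg (by rw [hw0]; exact one_pos) hw0'.ge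

theorem linearized_IVP_lower_bounds
    (κ : ℝ) (hκ : 0 < κ)
    (r : ℝ → ℝ) (hrb : ∃ B : ℝ, ∀ s : ℝ, |r s| ≤ B)
    (hr : ContDiff ℝ 1 r) (hrmono : StrictMono r)
    (hrsign : ∀ s : ℝ, 0 ≤ s * r s)
    (c₀ : ℝ) (hc₀ : 0 ≤ c₀)
    (c c' c'' : ℝ → ℝ) (hc : SolvesIVP κ r c₀ c c' c'')
    (w w' w'' : ℝ → ℝ)
    (hw1 : ∀ z ∈ Ici (0:ℝ), HasDerivWithinAt w (w' z) (Ici (0:ℝ)) z)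
    (hw2 : ∀ z ∈ Ici (0:ℝ), HasDerivWithinAt w' (w'' z) (Ici (0:ℝ)) z)
    (hw2c : ContinuousOn w'' (Ici (0:ℝ)))
    (hwode : ∀ z ∈ Ici (0:ℝ), κ * w'' z = deriv r (c z) * w z)
    (hw0 : w 0 = 1) (hw0' : w' 0 = 0) :
    ∀ z ∈ Ici (0:ℝ), 1 ≤ w z ∧ 0 ≤ w' z :=
  linearized_IVP_lower_bounds_general κ hκ r hrmono c w w' w'' hw1 hw2 hwode hw0 hw0'
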